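/- Let f be a continuous map of a compact real interval into itself admitting a horseshoe: there exist points a, b, c with either f(c) ≤ a = f(a) < b < c ≤ f(b) or f(c) ≥ a = f(a) > b > c ≥ f(b). Then for every rational number ρ with 0 < ρ ≤ 1/2, f has a cycle of over-rotation number ρ. -/

import Mathlib

open Set Function
open scoped Classical

namespace OverRotation

/-- Symbols for itineraries of unimodal maps, ordered `L < C < R` via `Symb.val`. -/
inductive Symb : Type
  | L : Symb
  | C : Symb
  | R : Symb
  deriving DecidableEq

def Symb.val : Symb → ℕ
  | Symb.L => 0
  | Symb.C => 1
  | Symb.R => 2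

/-- `GtA a x y` means `x >_a y`, i.e. `x < y < a` or `a < y < x`. -/
def GtA (a x y : ℝ) : Prop := (x < y ∧ y < a) ∨ (a < y ∧ y < x)

/-- `φ_a(y) = 1` if `y > a`, and `0` otherwise. -/
noncomputable def phiA (a y : ℝ) : ℝ := if a < y then 1 else 0

/-- The (forward) orbit of `x` under `f`. -/
def orbitSet (f : ℝ → ℝ) (x : ℝ) : Set ℝ := Set.range fun k : ℕ => f^[k] x

/-- The number of indices `0 ≤ i < q` at which consecutive displacements along the
orbit of `x` have different signs; for a cycle of over-rotation pair `(p,q)` this is `2p`. -/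
noncomputable def switchCount (f : ℝ → ℝ) (x : ℝ) (q : ℕ) : ℕ :=
  Set.ncard {i : ℕ | i < q ∧ (f^[i+1] x - f^[i] x) * (f^[i+2] x - f^[i+1] x) < 0}

/-- `x` generates a cycle of `f`, lying in `I`, of over-rotation pair `(p, q)`. -/
def IsCycleIn (f : ℝ → ℝ) (I : Set ℝ) (x : ℝ) (p q : ℕ) : Prop :=
  x ∈ I ∧ 2 ≤ q ∧ Function.minimalPeriod f x = q ∧ switchCount f x q = 2 * p

/-- The set of over-rotation numbers of cycles of `f` lying in `I`. -/
def orNumsIn (f : ℝ → ℝ) (I : Set ℝ) : Set ℝ :=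
  {ρ : ℝ | ∃ x p q, IsCycleIn f I x p q ∧ ρ = (p : ℝ) / (q : ℝ)}

/-- `L` is the code of the cycle `P` (with over-rotation number `ρ`, fixed point `a`):
`L` vanishes at the leftmost point of `P` and `L(f y) = L y + ρ - φ_a y` on `P`. -/
def IsCode (f : ℝ → ℝ) (a : ℝ) (P : Set ℝ) (ρ : ℝ) (L : ℝ → ℝ) : Prop :=
  (∃ x₀ ∈ P, (∀ y ∈ P, x₀ ≤ y) ∧ L x₀ = 0) ∧
    ∀ y ∈ P, L (f y) = L y + ρ - phiA a y

/-- A pattern: a cyclic permutation of `{0, …, n-1}`, `n ≥ 2`. -/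
def IsPattern {n : ℕ} (π : Equiv.Perm (Fin n)) : Prop :=
  2 ≤ n ∧ π.IsCycle ∧ ∀ i, π i ≠ i

/-- `f` exhibits the pattern `π` on the cycle `x 0 < x 1 < … < x (n-1)` inside `I`. -/
def ExhibitsOn (f : ℝ → ℝ) (I : Set ℝ) {n : ℕ} (π : Equiv.Perm (Fin n)) (x : Fin n → ℝ) : Prop :=
  (∀ i, x i ∈ I) ∧ StrictMono x ∧ ∀ i, f (x i) = x (π i)

/-- `f` exhibits the pattern `π` on some cycle inside `I`. -/
def Exhibits (f : ℝ → ℝ) (I : Set ℝ) {n : ℕ} (π : Equiv.Perm (Fin n)) : Prop :=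
  ∃ x : Fin n → ℝ, ExhibitsOn f I π x

/-- Pattern `π` forces pattern `θ`: every continuous self-map of a compact interval
having a cycle exhibiting `π` has a cycle exhibiting `θ`. -/
def Forces {m n : ℕ} (π : Equiv.Perm (Fin m)) (θ : Equiv.Perm (Fin n)) : Prop :=
  ∀ (f : ℝ → ℝ) (lo hi : ℝ), lo ≤ hi → ContinuousOn f (Set.Icc lo hi) →
    Set.MapsTo f (Set.Icc lo hi) (Set.Icc lo hi) →
    Exhibits f (Set.Icc lo hi) π → Exhibits f (Set.Icc lo hi) θ

/-- Twice the `p` of the over-rotation pair of the pattern `π`: the number of (spatial)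
positions at which the displacement direction changes at the next step. -/
noncomputable def permSwitchTwice {n : ℕ} (π : Equiv.Perm (Fin n)) : ℕ :=
  Set.ncard {i : Fin n | (i < π i ∧ π (π i) < π i) ∨ (π i < i ∧ π i < π (π i))}

/-- Over-rotation number of a pattern. -/
noncomputable def rotNum {n : ℕ} (π : Equiv.Perm (Fin n)) : ℝ :=
  (permSwitchTwice π : ℝ) / (2 * (n : ℝ))

/-- An over-twist pattern: a pattern forcing no other pattern of the same
over-rotation number. -/
def IsOverTwist {n : ℕ} (π : Equiv.Perm (Fin n)) : Prop :=
  IsPattern π ∧ ∀ (m : ℕ) (θ : Equiv.Perm (Fin m)), IsPattern θ →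
    rotNum θ = rotNum π → Forces π θ → ∃ h : m = n, h ▸ θ = π

/-- `f` is the `P`-linear map of the cycle `x 0 < … < x (n-1)` exhibiting `π`:
it agrees with the pattern on the cycle and is affine on each complementary interval
(and hence continuous on the convex hull of the cycle). -/
def IsPLinear {n : ℕ} (x : Fin n → ℝ) (π : Equiv.Perm (Fin n)) (f : ℝ → ℝ) : Prop :=
  (∀ i, f (x i) = x (π i)) ∧
  (∀ i j : Fin n, (i : ℕ) + 1 = (j : ℕ) → ∀ t : ℝ, t ∈ Set.Icc (0:ℝ) 1 →
    f ((1 - t) * x i + t * x j) = (1 - t) * x (π i) + t * x (π j)) ∧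
  (∀ i j : Fin n, ContinuousOn f (Set.Icc (x i) (x j)))

/-- A unimodal map of `[0,1]` with critical point `c`: continuous, strictly increasing
on `[0,c]`, strictly decreasing on `[c,1]`, with a unique fixed point. -/
def UnimodalMap (f : ℝ → ℝ) (c : ℝ) : Prop :=
  ContinuousOn f (Set.Icc 0 1) ∧ Set.MapsTo f (Set.Icc 0 1) (Set.Icc 0 1) ∧
  c ∈ Set.Icc (0:ℝ) 1 ∧ StrictMonoOn f (Set.Icc 0 c) ∧ StrictAntiOn f (Set.Icc c 1) ∧
  ∃! a, a ∈ Set.Icc (0:ℝ) 1 ∧ f a = a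

/-- A unimodal pattern: increasing up to some index, decreasing afterwards. -/
def UnimodalPattern {n : ℕ} (π : Equiv.Perm (Fin n)) : Prop :=
  ∃ m : Fin n, (∀ i j : Fin n, i < j → j ≤ m → π i < π j) ∧
    (∀ i j : Fin n, m ≤ i → i < j → π j < π i)

/-- The itinerary of `x` with respect to critical point `c`. -/
noncomputable def itin (f : ℝ → ℝ) (c x : ℝ) (j : ℕ) : Symb :=
  if f^[j] x < c then Symb.L else if f^[j] x = c then Symb.C else Symb.R

/-- The kneading sequence of a unimodal map `f` with critical point `c`. -/
noncomputable def kneading (f : ℝ → ℝ) (c : ℝ) : ℕ → Symb := itin f c (f c)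

/-- The number of `R`'s among `A 0, …, A (j-1)` is even. -/
def RParityEven (A : ℕ → Symb) (j : ℕ) : Prop :=
  Even (Set.ncard {i : ℕ | i < j ∧ A i = Symb.R})

/-- The strict kneading (parity-lexicographic) order `A ≻ B` on symbol sequences. -/
def KOgt (A B : ℕ → Symb) : Prop :=
  ∃ j : ℕ, (∀ i < j, A i = B i) ∧
    ((RParityEven A j ∧ (B j).val < (A j).val) ∨ (¬ RParityEven A j ∧ (A j).val < (B j).val))

/-- `A ⪰ B` in the kneading order. -/
def KOge (A B : ℕ → Symb) : Prop := A = B ∨ KOgt A B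

/-- The kneading sequence `ν_{p/q}` of the unimodal over-twist pattern of
over-rotation number `p/q`. -/
def nuRho (p q : ℕ) (n : ℕ) : Symb :=
  if ((n+1) * p) % q = 0 then Symb.C
  else if ((n+1) * p) % q < 2 * p then Symb.R
  else Symb.L

/-- The strongest kneading sequence `ν'_{p/q}` associated with the over-rotation
interval `[p/q, 1/2]`. -/
def nuRho' (p q : ℕ) (n : ℕ) : Symb :=
  let k := if n < q + 2 then n else ((n - 2) % q) + 2
  if k = q - 1 then Symb.L
  else if k = q then Symb.R
  else if k = q + 1 then Symb.R
  else nuRho p q k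

/-- The permutation `π_{p/q}` (0-based): `i ↦ i + p` for `i ≤ q-2p-1`,
`i ↦ 2q-2p-1-i` for `q-2p ≤ i ≤ q-p-1`, and `i ↦ q-1-i` for `i ≥ q-p`. -/
def twistFun (p q i : ℕ) : ℕ :=
  if i + 2 * p < q then i + p
  else if i + p < q then 2 * q - 2 * p - 1 - i
  else q - 1 - i

/-- Strict Sharkovsky ordering `m ≻ₛ n` ("`m` is sharper than `n`"). -/
def SharkGt (m n : ℕ) : Prop :=
  if m / 2 ^ (m.factorization 2) = 1 then n / 2 ^ (n.factorization 2) = 1 ∧ n < m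
  else n / 2 ^ (n.factorization 2) = 1 ∨ m.factorization 2 < n.factorization 2 ∨
    (m.factorization 2 = n.factorization 2 ∧
      m / 2 ^ (m.factorization 2) < n / 2 ^ (n.factorization 2))

/-- Non-strict Sharkovsky ordering, so that `Sh(k) = {n | 0 < n ∧ SharkGe k n}`. -/
def SharkGe (m n : ℕ) : Prop := m = n ∨ SharkGt m n

/-- `f` is piecewise (strictly) monotone on `[lo, hi]`. -/
def PiecewiseMonotoneOn (f : ℝ → ℝ) (lo hi : ℝ) : Prop :=
  ∃ (k : ℕ) (t : ℕ → ℝ), 0 < k ∧ t 0 = lo ∧ t k = hi ∧ (∀ i < k, t i < t (i+1)) ∧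
    ∀ i < k, StrictMonoOn f (Set.Icc (t i) (t (i+1))) ∨ StrictAntiOn f (Set.Icc (t i) (t (i+1)))

/-- The cycle `y 0 < … < y (N-1)` of `g` has a block structure over the pattern `θ`
on `m` blocks of `N/m` consecutive points each. -/
def HasBlockStructure (g : ℝ → ℝ) {N m : ℕ} (y : Fin N → ℝ) (θ : Equiv.Perm (Fin m)) : Prop :=
  m ∣ N ∧ 1 < m ∧ m < N ∧
  ∀ i : Fin N, ∃ (j : Fin N) (b b' : Fin m),
    g (y i) = y j ∧ (b : ℕ) = (i : ℕ) / (N / m) ∧ (b' : ℕ) = (j : ℕ) / (N / m) ∧ θ b = b'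

/-- `LF(p/q)`: the largest rational `l/k` with `l, k` positive, `k < q` and `l/k < p/q`. -/
noncomputable def LFrac (p q : ℕ) : ℝ :=
  sSup {r : ℝ | ∃ l k : ℕ, 0 < l ∧ 0 < k ∧ k < q ∧ (l:ℝ)/(k:ℝ) < (p:ℝ)/(q:ℝ) ∧ r = (l:ℝ)/(k:ℝ)}

end OverRotation

namespace OverRotation

/-!
In the orientation `f c ≤ a = f a < b < c ≤ f b` (the other one is its conjugate by `y ↦ -y`),
`J = [b, c]` covers `[a, c]`, and pulling `c` back towards `a` gives a staircase
`b ≥ w 0 > w 1 > ⋯ > a` with `f (w 0) = c` and `f (w (k + 1)) = w k`. For `ρ = p / q` in lowest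
terms, the intervals `B J B J ⋯ B J S_m ⋯ S_1` (`2p` of them alternating, then `m = q - 2p`
staircase steps `S_k = [w (k + 1), w k]`, `B = S_0`) each cover the next, cyclically, so some
periodic orbit follows them. This orbit moves right except at its `p` visits to `J`, so its
direction changes `2p` times per `q` steps; and since the number `p` of left moves per `q` steps is
coprime to `q`, its minimal period is `q`.
-/

section Covering

variable {α δ : Type*} [ConditionallyCompleteLinearOrder α] [TopologicalSpace α]
  [OrderTopology α] [DenselyOrdered α] [LinearOrder δ] [TopologicalSpace δ]
  [OrderClosedTopology δ]

/-- Take `t` the first point of `[a, b]` where `f` takes the value `f b`, and `s` the last point of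
`[a, t]` where it takes the value `f a`: on `[s, t]` the map cannot leave `[[f a, f b]]` without
taking one of these two values once more. -/
theorem exists_Icc_image_eq_uIcc {f : α → δ} {a b : α} (hab : a ≤ b)
    (hf : ContinuousOn f (Icc a b)) :
    ∃ s t, a ≤ s ∧ s ≤ t ∧ t ≤ b ∧ f '' Icc s t = uIcc (f a) (f b) := by
  set T := Icc a b ∩ f ⁻¹' {f b}
  have hT : BddBelow T := bddBelow_Icc.mono inter_subset_left
  obtain ⟨⟨hat, htb⟩, hft⟩ : sInf T ∈ T :=
    (hf.preimage_isClosed_of_isClosed isClosed_Icc isClosed_singleton).csInf_mem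
      ⟨b, right_mem_Icc.2 hab, rfl⟩ hT
  set t := sInf T
  have hfat : ContinuousOn f (Icc a t) := hf.mono (Icc_subset_Icc le_rfl htb)
  set S := Icc a t ∩ f ⁻¹' {f a}
  have hS : BddAbove S := bddAbove_Icc.mono inter_subset_left
  obtain ⟨⟨has, hst⟩, hfs⟩ : sSup S ∈ S :=
    (hfat.preimage_isClosed_of_isClosed isClosed_Icc isClosed_singleton).csSup_mem
      ⟨a, left_mem_Icc.2 hat, rfl⟩ hS
  set s := sSup S
  have hfst : ContinuousOn f (Icc s t) := hfat.mono (Icc_subset_Icc has le_rfl)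
  have hIVT : ∀ {u v}, s ≤ u → u ≤ v → v ≤ t → uIcc (f u) (f v) ⊆ f '' Icc u v :=
    fun hsu huv hvt => uIcc_of_le huv ▸
      intermediate_value_uIcc (uIcc_of_le huv ▸ hfst.mono (Icc_subset_Icc hsu hvt))
  refine ⟨s, t, has, hst, htb, subset_antisymm ?_ (hfs ▸ hft ▸ hIVT le_rfl hst le_rfl)⟩
  rintro _ ⟨x, ⟨hsx, hxt⟩, rfl⟩
  by_contra hx
  have : f a ∈ uIcc (f x) (f b) ∨ f b ∈ uIcc (f a) (f x) := by
    simp only [mem_uIcc] at hx ⊢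
    grind
  rcases this with h | h
  · obtain ⟨y, ⟨hxy, hyt⟩, hfy⟩ := hIVT hsx hxt le_rfl (hft ▸ h)
    have : y ≤ s := le_csSup hS ⟨⟨has.trans (hsx.trans hxy), hyt⟩, hfy⟩
    obtain rfl : x = s := le_antisymm (hxy.trans this) hsx
    exact hx (hfs ▸ left_mem_uIcc)
  · obtain ⟨y, ⟨hsy, hyx⟩, hfy⟩ := hIVT le_rfl hsx hxt (hfs ▸ h)
    have : t ≤ y := csInf_le hT ⟨⟨has.trans hsy, hyx.trans (hxt.trans htb)⟩, hfy⟩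
    obtain rfl : x = t := le_antisymm hxt (this.trans hyx)
    exact hx (hft ▸ right_mem_uIcc)

theorem exists_Icc_image_eq_of_Icc_subset_image {f : α → δ} {u v : α} {k₁ k₂ : δ}
    (hf : ContinuousOn f (Icc u v)) (hk : k₁ ≤ k₂) (hK : Icc k₁ k₂ ⊆ f '' Icc u v) :
    ∃ s t, u ≤ s ∧ s ≤ t ∧ t ≤ v ∧ f '' Icc s t = Icc k₁ k₂ := by
  obtain ⟨x₁, ⟨hux₁, hx₁v⟩, rfl⟩ := hK (left_mem_Icc.2 hk)
  obtain ⟨x₂, ⟨hux₂, hx₂v⟩, rfl⟩ := hK (right_mem_Icc.2 hk)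
  rcases le_total x₁ x₂ with h | h
  · obtain ⟨s, t, h₁, hst, h₂, himg⟩ :=
      exists_Icc_image_eq_uIcc h (hf.mono (Icc_subset_Icc hux₁ hx₂v))
    exact ⟨s, t, hux₁.trans h₁, hst, h₂.trans hx₂v, himg.trans (uIcc_of_le hk)⟩
  · obtain ⟨s, t, h₁, hst, h₂, himg⟩ :=
      exists_Icc_image_eq_uIcc h (hf.mono (Icc_subset_Icc hux₂ hx₁v))
    exact ⟨s, t, hux₂.trans h₁, hst, h₂.trans hx₁v, himg.trans (uIcc_of_ge hk)⟩

theorem exists_Icc_iterate_image_eq_of_covers {f : α → α} {S : Set α} (hf : ContinuousOn f S)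
    (n : ℕ) {l r : ℕ → α} (hlr : ∀ i, l i ≤ r i) (hS : ∀ i, Icc (l i) (r i) ⊆ S)
    (hcov : ∀ i < n, Icc (l (i + 1)) (r (i + 1)) ⊆ f '' Icc (l i) (r i)) :
    ∃ s t, s ≤ t ∧ ContinuousOn f^[n] (Icc s t) ∧
      (∀ i ≤ n, MapsTo f^[i] (Icc s t) (Icc (l i) (r i))) ∧
      f^[n] '' Icc s t = Icc (l n) (r n) := by
  induction n generalizing l r with
  | zero =>
    refine ⟨l 0, r 0, hlr 0, continuousOn_id, fun i hi => ?_, image_id _⟩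
    obtain rfl : i = 0 := Nat.le_zero.1 hi
    exact mapsTo_id _
  | succ n ih =>
    obtain ⟨s', t', hst', hcont', hmaps', himg'⟩ := ih (l := fun i => l (i + 1))
      (r := fun i => r (i + 1)) (fun i => hlr _) (fun i => hS _) (fun i hi => hcov _ (by omega))
    have hsub : Icc s' t' ⊆ f '' Icc (l 0) (r 0) :=
      (hmaps' 0 n.zero_le).subset_preimage.trans (fun y hy => hcov 0 n.succ_pos hy)
    obtain ⟨s, t, hls, hst, htr, himg⟩ :=
      exists_Icc_image_eq_of_Icc_subset_image (hf.mono (hS 0)) hst' hsub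
    have h0 : Icc s t ⊆ Icc (l 0) (r 0) := Icc_subset_Icc hls htr
    have hmaps : MapsTo f (Icc s t) (Icc s' t') := himg ▸ mapsTo_image f _
    refine ⟨s, t, hst, ?_, fun i hi => ?_, ?_⟩
    · rw [iterate_succ]
      exact hcont'.comp (hf.mono (h0.trans (hS 0))) hmaps
    · cases i with
      | zero => exact fun y hy => h0 hy
      | succ i => rw [iterate_succ]; exact (hmaps' i (by omega)).comp hmaps
    · rw [iterate_succ, image_comp, himg, himg']

theorem exists_isPeriodicPt_of_covers {f : α → α} {S : Set α} (hf : ContinuousOn f S) {q : ℕ}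
    {l r : ℕ → α} (hlr : ∀ i, l i ≤ r i) (hS : ∀ i, Icc (l i) (r i) ⊆ S)
    (hcov : ∀ i < q, Icc (l (i + 1)) (r (i + 1)) ⊆ f '' Icc (l i) (r i))
    (hl : l q = l 0) (hr : r q = r 0) :
    ∃ x, IsPeriodicPt f q x ∧ ∀ i ≤ q, f^[i] x ∈ Icc (l i) (r i) := by
  obtain ⟨s, t, hst, hcont, hmaps, himg⟩ :=
    exists_Icc_iterate_image_eq_of_covers hf q hlr hS hcov
  have hcover : Icc s t ⊆ f^[q] '' Icc s t := by
    rw [himg, hl, hr]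
    exact fun y hy => hmaps 0 q.zero_le hy
  obtain ⟨u, hu, hfu⟩ := hcover (left_mem_Icc.2 hst)
  obtain ⟨v, hv, hfv⟩ := hcover (right_mem_Icc.2 hst)
  have huv : uIcc v u ⊆ Icc s t := uIcc_subset_Icc hv hu
  obtain ⟨x, hx, hfix⟩ :=
    exists_mem_uIcc_isFixedPt (hcont.mono huv) (hfv ▸ hv.2) (hfu ▸ hu.1)
  exact ⟨x, hfix, fun i hi => hmaps i hi (huv hx)⟩

end Covering

section Orbit

theorem minimalPeriod_eq_of_coprime_count {α : Type*} {f : α → α} {x : α} {q : ℕ}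
    (P : α → Prop) [DecidablePred P] (hx : IsPeriodicPt f q x) (hq : 0 < q)
    (hcop : (Nat.count (fun i => P (f^[i] x)) q).Coprime q) : minimalPeriod f x = q := by
  set d := minimalPeriod f x
  set Q := fun i => P (f^[i] x)
  have hper : Periodic Q d := fun i => by simp only [Q, d, iterate_add_minimalPeriod_eq]
  have hcount : ∀ k, Nat.count Q (k * d) = k * Nat.count Q d := by
    intro k
    induction k with
    | zero => simp
    | succ k ih =>
      have hshift : (fun j => Q (k * d + j)) = Q := funext fun j => by
        rw [add_comm]; simpa using hper.nat_mul k j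
      rw [add_mul, one_mul, Nat.count_add, ih]
      simp only [hshift]
      ring
  obtain ⟨k, rfl⟩ := hx.minimalPeriod_dvd
  rw [mul_comm d k, hcount] at hcop
  rw [(Nat.Coprime.coprime_mul_right hcop).eq_one_of_dvd (dvd_mul_right k d), mul_one]

theorem count_odd_lt_two_mul {p q : ℕ} (hpq : 2 * p ≤ q) :
    Nat.count (fun i => i < 2 * p ∧ Odd i) q = p := by
  have : (Finset.range q).filter (fun i => i < 2 * p ∧ Odd i) =
      (Finset.range p).image (fun k => 2 * k + 1) := by
    ext i
    simp only [Finset.mem_filter, Finset.mem_range, Finset.mem_image, Nat.odd_iff]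
    constructor
    · rintro ⟨-, hi, hodd⟩
      exact ⟨i / 2, by omega, by omega⟩
    · rintro ⟨k, hk, rfl⟩
      omega
  rw [Nat.count_eq_card_filter_range, this,
    Finset.card_image_of_injective _ (fun _ _ h => by omega), Finset.card_range]

theorem isCycleIn_of_orbit_signs {f : ℝ → ℝ} {I : Set ℝ} {x : ℝ} {p q : ℕ}
    (hxI : x ∈ I) (hp : 0 < p) (hpq : 2 * p ≤ q) (hcop : p.Coprime q) (hx : IsPeriodicPt f q x)
    (hsign : ∀ j < q,
      if j < 2 * p ∧ Odd j then f^[j + 1] x < f^[j] x else f^[j] x < f^[j + 1] x) :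
    IsCycleIn f I x p q := by
  have hq : 0 < q := by omega
  have hstep : ∀ j ≤ q, (f^[j + 1] x < f^[j] x ↔ j < 2 * p ∧ Odd j) ∧
      (f^[j] x < f^[j + 1] x ↔ ¬(j < 2 * p ∧ Odd j)) := by
    intro j hj
    have h : if j < 2 * p ∧ Odd j then f^[j + 1] x < f^[j] x else f^[j] x < f^[j + 1] x := by
      rcases hj.lt_or_eq with hj | rfl
      · exact hsign j hj
      · have h0 := hsign 0 hq
        rw [if_neg (by omega), iterate_succ_apply', hx.eq]
        simpa using h0
    split_ifs at h with hD
    · exact ⟨iff_of_true h hD, iff_of_false h.not_gt (not_not.2 hD)⟩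
    · exact ⟨iff_of_false h.not_gt hD, iff_of_true h hD⟩
  have hswitch : {i | i < q ∧ (f^[i + 1] x - f^[i] x) * (f^[i + 2] x - f^[i + 1] x) < 0} =
      Finset.range (2 * p) := by
    ext i
    simp only [mem_ofPred_eq, Finset.coe_range, mem_Iio]
    by_cases hi : i < q
    · rw [mul_neg_iff, sub_pos, sub_neg, sub_pos, sub_neg, (hstep i hi.le).1, (hstep i hi.le).2,
        (hstep (i + 1) hi).1, (hstep (i + 1) hi).2]
      simp only [Nat.odd_iff]
      omega
    · simp only [hi, false_and, false_iff]
      omega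
  have hcount : Nat.count (fun i => f (f^[i] x) < f^[i] x) q = p := by
    rw [← count_odd_lt_two_mul hpq, Nat.count_eq_card_filter_range,
      Nat.count_eq_card_filter_range]
    congr 1
    refine Finset.filter_congr fun i hi => ?_
    rw [← iterate_succ_apply' f i x]
    exact (hstep i (Finset.mem_range.1 hi).le).1
  refine ⟨hxI, by omega,
    minimalPeriod_eq_of_coprime_count (fun y => f y < y) hx hq (hcount ▸ hcop), ?_⟩
  rw [switchCount, hswitch, ncard_coe_finset, Finset.card_range]

end Orbit

theorem IsCycleIn.mono {f : ℝ → ℝ} {I J : Set ℝ} {x : ℝ} {p q : ℕ}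
    (h : IsCycleIn f I x p q) (hIJ : I ⊆ J) : IsCycleIn f J x p q :=
  ⟨hIJ h.1, h.2⟩

theorem IsCycleIn.of_neg_conj {f : ℝ → ℝ} {I : Set ℝ} {x : ℝ} {p q : ℕ}
    (h : IsCycleIn (fun y => -f (-y)) I x p q) : IsCycleIn f (Neg.neg ⁻¹' I) (-x) p q := by
  set g := fun y => -f (-y)
  have hconj : ∀ n y, f^[n] (-y) = -g^[n] y := fun n y =>
    ((Semiconj.iterate_right (f := Neg.neg) (fun y => neg_neg (f (-y))) n) y).symm
  obtain ⟨hxI, hq, hper, hsw⟩ := h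
  refine ⟨by simpa using hxI, hq,
    hper ▸ minimalPeriod_eq_minimalPeriod_iff.2 fun n => ?_, hsw ▸ ?_⟩
  · simp only [IsPeriodicPt, IsFixedPt, hconj, neg_inj]
  · have key : ∀ u v w : ℝ, (-v - -u) * (-w - -v) = (v - u) * (w - v) := fun _ _ _ => by ring
    simp only [switchCount, hconj, key]

section Horseshoe

theorem lt_apply_of_le_of_le_apply {α : Type*} [LinearOrder α] {f : α → α} {x u : α}
    (hxu : x ≤ u) (hu : u ≤ f x) (hfu : f u ≠ u) : x < f x := by
  refine (hxu.trans hu).lt_of_ne fun h => hfu ?_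
  obtain rfl : x = u := le_antisymm hxu (h ▸ hu)
  exact h.symm

theorem apply_lt_of_le_of_apply_le {α : Type*} [LinearOrder α] {f : α → α} {x u : α}
    (hux : u ≤ x) (hu : f x ≤ u) (hfu : f u ≠ u) : f x < x :=
  lt_apply_of_le_of_le_apply (α := αᵒᵈ) hux hu hfu

variable {f : ℝ → ℝ} {a b c : ℝ}

theorem exists_staircase (hf : ContinuousOn f (Icc a b)) (hfa : f a = a) (hab : a < b)
    (hbc : b < c) (hfb : c ≤ f b) :
    ∃ w : ℕ → ℝ, StrictAnti w ∧ (∀ n, w n ∈ Ioc a b) ∧ f (w 0) = c ∧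
      ∀ n, f (w (n + 1)) = w n := by
  set P := fun x => x ∈ Ioc a b ∧ x < f x
  have hpre : ∀ x : Subtype P, ∃ y : Subtype P, f y = x ∧ y.1 < x := by
    rintro ⟨x, ⟨hax, hxb⟩, hxfx⟩
    obtain ⟨y, ⟨hay, hyx⟩, hfy⟩ :=
      intermediate_value_Icc hax.le (hf.mono (Icc_subset_Icc le_rfl hxb))
        ⟨hfa.le.trans hax.le, hxfx.le⟩
    have hay : a < y := hay.lt_of_ne (by rintro rfl; exact hax.ne (hfa ▸ hfy))
    have hyx : y < x := hyx.lt_of_ne (by rintro rfl; exact hxfx.ne' hfy)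
    exact ⟨⟨y, ⟨hay, hyx.le.trans hxb⟩, hfy ▸ hyx⟩, hfy, hyx⟩
  choose g hgf hglt using hpre
  obtain ⟨w₀, ⟨haw, hwb⟩, hfw⟩ :=
    intermediate_value_Icc hab.le hf ⟨hfa.le.trans (hab.trans hbc).le, hfb⟩
  have haw : a < w₀ := haw.lt_of_ne (by rintro rfl; exact (hab.trans hbc).ne (hfa ▸ hfw))
  have hP : P w₀ := ⟨⟨haw, hwb⟩, hfw ▸ hwb.trans_lt hbc⟩
  refine ⟨fun n => (g^[n] ⟨w₀, hP⟩).1, strictAnti_nat_of_succ_lt fun n => ?_,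
    fun n => (g^[n] _).2.1, hfw, fun n => ?_⟩
  · simp only [iterate_succ_apply']
    exact hglt _
  · simp only [iterate_succ_apply']
    exact hgf _

/-- Endpoints of the `j`-th interval of the cyclic loop `B J ⋯ B J S_m ⋯ S_1` made of `p` copies
of `B J` followed by `m = q - 2p` staircase steps, where `J = [b, c]`, `S_k = [w (k + 1), w k]` and
`B = S_0`; position `q` is position `0` again. -/
def loopLeft (w : ℕ → ℝ) (b : ℝ) (p q j : ℕ) : ℝ :=
  if j < 2 * p then (if Odd j then b else w 1) else w (q - j + 1)

def loopRight (w : ℕ → ℝ) (c : ℝ) (p q j : ℕ) : ℝ :=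
  if j < 2 * p then (if Odd j then c else w 0) else w (q - j)

variable {w : ℕ → ℝ} {p q j : ℕ}

theorem loopLeft_le_loopRight (hbc : b ≤ c) (hw : StrictAnti w) :
    loopLeft w b p q j ≤ loopRight w c p q j := by
  unfold loopLeft loopRight
  split_ifs
  exacts [hbc, hw.antitone (Nat.le_succ 0), hw.antitone (Nat.le_succ _)]

theorem Icc_loopLeft_loopRight_subset (hbc : b ≤ c) (hwI : ∀ n, w n ∈ Ioc a b) :
    Icc (loopLeft w b p q j) (loopRight w c p q j) ⊆ Icc a c := by
  have hab : a ≤ b := (hwI 0).1.le.trans (hwI 0).2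
  refine Icc_subset_Icc ?_ ?_
  · unfold loopLeft
    split_ifs
    exacts [hab, (hwI _).1.le, (hwI _).1.le]
  · unfold loopRight
    split_ifs
    exacts [le_rfl, (hwI _).2.trans hbc, (hwI _).2.trans hbc]

theorem loop_covers (hf : ContinuousOn f (Icc a c)) (hfc : f c ≤ a) (hbc : b < c)
    (hfb : c ≤ f b) (hw : StrictAnti w) (hwI : ∀ n, w n ∈ Ioc a b) (hw0 : f (w 0) = c)
    (hws : ∀ n, f (w (n + 1)) = w n) (hj : j < q) :
    Icc (loopLeft w b p q (j + 1)) (loopRight w c p q (j + 1)) ⊆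
      f '' Icc (loopLeft w b p q j) (loopRight w c p q j) := by
  have hab : a ≤ b := (hwI 0).1.le.trans (hwI 0).2
  have hstep : ∀ k, Icc (f (w (k + 1))) (f (w k)) ⊆ f '' Icc (w (k + 1)) (w k) := fun k =>
    intermediate_value_Icc (hw.antitone (Nat.le_succ k))
      (hf.mono (Icc_subset_Icc (hwI _).1.le ((hwI _).2.trans hbc.le)))
  by_cases hJ : j < 2 * p ∧ Odd j
  · have hcov : Icc a c ⊆ f '' Icc b c := (Icc_subset_Icc hfc hfb).trans
      (intermediate_value_Icc' hbc.le (hf.mono (Icc_subset_Icc hab le_rfl)))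
    simpa [loopLeft, loopRight, hJ] using (Icc_loopLeft_loopRight_subset hbc.le hwI).trans hcov
  by_cases h : j < 2 * p
  · have hcov : Icc b c ⊆ f '' Icc (w 1) (w 0) := by
      have h0 := hstep 0
      rw [hws, hw0] at h0
      exact (Icc_subset_Icc (hwI 0).2 le_rfl).trans h0
    have hj1 : j + 1 < 2 * p ∧ Odd (j + 1) := by simp only [Nat.odd_iff] at hJ ⊢; omega
    simpa [loopLeft, loopRight, h, hj1, show ¬Odd j from fun ho => hJ ⟨h, ho⟩] using hcov
  · obtain ⟨k, hk⟩ : ∃ k, q - j = k + 1 := ⟨q - (j + 1), by omega⟩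
    simpa [loopLeft, loopRight, h, show ¬j + 1 < 2 * p by omega, hk,
      show q - (j + 1) = k by omega, hws] using hstep (k + 1)

theorem loop_step_sign (hbc : b < c) (hfb : c ≤ f b) (hw : StrictAnti w)
    (hwI : ∀ n, w n ∈ Ioc a b) (hw0 : f (w 0) = c) (hws : ∀ n, f (w (n + 1)) = w n)
    (hj : j < q) {y : ℝ} (hy : y ∈ Icc (loopLeft w b p q j) (loopRight w c p q j))
    (hfy : f y ∈ Icc (loopLeft w b p q (j + 1)) (loopRight w c p q (j + 1))) :
    if j < 2 * p ∧ Odd j then f y < y else y < f y := by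
  split_ifs with hJ
  · have hr : loopRight w c p q (j + 1) ≤ w 0 := by
      have : ¬Odd (j + 1) := by simp only [Nat.odd_iff] at hJ ⊢; omega
      unfold loopRight
      split_ifs
      exacts [le_rfl, hw.antitone (Nat.zero_le _)]
    have hl : loopLeft w b p q j = b := by simp [loopLeft, hJ]
    exact apply_lt_of_le_of_apply_le (hl ▸ hy.1) (hfy.2.trans (hr.trans (hwI 0).2))
      (hbc.trans_le hfb).ne'
  by_cases h : j < 2 * p
  · have hj1 : j + 1 < 2 * p ∧ Odd (j + 1) := by simp only [Nat.odd_iff] at hJ ⊢; omega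
    have hr : loopRight w c p q j = w 0 := by
      simp [loopRight, h, show ¬Odd j from fun ho => hJ ⟨h, ho⟩]
    have hl : loopLeft w b p q (j + 1) = b := by simp [loopLeft, hj1]
    refine lt_apply_of_le_of_le_apply (hr ▸ hy.2) ((hwI 0).2.trans (hl ▸ hfy.1)) ?_
    rw [hw0]
    exact ((hwI 0).2.trans_lt hbc).ne'
  · obtain ⟨k, hk⟩ : ∃ k, q - j = k + 1 := ⟨q - (j + 1), by omega⟩
    have hr : loopRight w c p q j = w (k + 1) := by simp [loopRight, h, hk]
    have hl : loopLeft w b p q (j + 1) = w (k + 1) := by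
      simp [loopLeft, show ¬j + 1 < 2 * p by omega, show q - (j + 1) = k by omega]
    refine lt_apply_of_le_of_le_apply (hr ▸ hy.2) (hl ▸ hfy.1) ?_
    rw [hws]
    exact (hw k.lt_succ_self).ne'

theorem exists_isCycleIn_of_horseshoe (hf : ContinuousOn f (Icc a c)) (hfc : f c ≤ a)
    (hfa : f a = a) (hab : a < b) (hbc : b < c) (hfb : c ≤ f b) (hp : 0 < p) (hpq : 2 * p ≤ q)
    (hcop : p.Coprime q) : ∃ x, IsCycleIn f (Icc a c) x p q := by
  obtain ⟨w, hw, hwI, hw0, hws⟩ :=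
    exists_staircase (hf.mono (Icc_subset_Icc le_rfl hbc.le)) hfa hab hbc hfb
  have hl : loopLeft w b p q q = loopLeft w b p q 0 := by simp [loopLeft, hp, not_lt.2 hpq]
  have hr : loopRight w c p q q = loopRight w c p q 0 := by simp [loopRight, hp, not_lt.2 hpq]
  have hsub j := Icc_loopLeft_loopRight_subset (p := p) (q := q) (j := j) hbc.le hwI
  obtain ⟨x, hx, horbit⟩ := exists_isPeriodicPt_of_covers (q := q) (l := loopLeft w b p q)
    (r := loopRight w c p q) hf (fun j => loopLeft_le_loopRight hbc.le hw) hsub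
    (fun j hj => loop_covers hf hfc hbc hfb hw hwI hw0 hws hj) hl hr
  refine ⟨x, isCycleIn_of_orbit_signs (hsub 0 (horbit 0 q.zero_le)) hp hpq hcop hx
    fun j hj => ?_⟩
  have hnext := horbit (j + 1) hj
  rw [iterate_succ_apply'] at hnext ⊢
  exact loop_step_sign hbc hfb hw hwI hw0 hws hj (horbit j hj.le) hnext

theorem exists_isCycleIn_of_horseshoe' (hf : ContinuousOn f (Icc c a)) (hfc : a ≤ f c)
    (hfa : f a = a) (hba : b < a) (hcb : c < b) (hfb : f b ≤ c) (hp : 0 < p) (hpq : 2 * p ≤ q)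
    (hcop : p.Coprime q) : ∃ x, IsCycleIn f (Icc c a) x p q := by
  have hg : ContinuousOn (fun y => -f (-y)) (Icc (-a) (-c)) :=
    (hf.comp continuous_neg.continuousOn fun y hy => ⟨le_neg.1 hy.2, neg_le.1 hy.1⟩).neg
  obtain ⟨x, hx⟩ := exists_isCycleIn_of_horseshoe hg (by simpa using hfc) (by simp [hfa])
    (neg_lt_neg hba) (neg_lt_neg hcb) (by simpa using hfb) hp hpq hcop
  exact ⟨-x, hx.of_neg_conj.mono fun y hy => ⟨neg_le_neg_iff.1 hy.2, neg_le_neg_iff.1 hy.1⟩⟩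

end Horseshoe

theorem exists_coprime_div_eq_of_pos_of_le_half {ρ : ℚ} (h0 : 0 < ρ) (h1 : ρ ≤ 1 / 2) :
    ∃ p q : ℕ, 0 < p ∧ 2 * p ≤ q ∧ p.Coprime q ∧ (p : ℝ) / q = ρ := by
  have hnum : 0 < ρ.num := Rat.num_pos.2 h0
  have hp : (ρ.num.natAbs : ℤ) = ρ.num := Int.natAbs_of_nonneg hnum.le
  refine ⟨ρ.num.natAbs, ρ.den, by omega, ?_, ρ.reduced, ?_⟩
  · rw [Rat.le_iff] at h1
    norm_num at h1
    omega
  · rw [Rat.cast_def, ← Int.cast_natCast, hp]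

theorem horseshoe_gives_all_rotation_numbers_general (f : ℝ → ℝ) (lo hi : ℝ)
    (hcont : ContinuousOn f (Set.Icc lo hi))
    (a b c : ℝ) (ha : a ∈ Set.Icc lo hi) (hc : c ∈ Set.Icc lo hi)
    (hhs : (f c ≤ a ∧ f a = a ∧ a < b ∧ b < c ∧ c ≤ f b) ∨
      (f c ≥ a ∧ f a = a ∧ a > b ∧ b > c ∧ c ≥ f b)) :
    ∀ ρ : ℚ, 0 < ρ → ρ ≤ 1 / 2 →
      ∃ (x : ℝ) (p q : ℕ), IsCycleIn f (Set.Icc lo hi) x p q ∧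
        (p : ℝ) / (q : ℝ) = (ρ : ℝ) := by
  intro ρ hρ0 hρ1
  obtain ⟨p, q, hp, hpq, hcop, hρ⟩ := exists_coprime_div_eq_of_pos_of_le_half hρ0 hρ1
  rcases hhs with ⟨hfc, hfa, hab, hbc, hfb⟩ | ⟨hfc, hfa, hba, hcb, hfb⟩
  · have hI : Icc a c ⊆ Icc lo hi := Icc_subset_Icc ha.1 hc.2
    obtain ⟨x, hx⟩ :=
      exists_isCycleIn_of_horseshoe (hcont.mono hI) hfc hfa hab hbc hfb hp hpq hcop
    exact ⟨x, p, q, hx.mono hI, hρ⟩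
  · have hI : Icc c a ⊆ Icc lo hi := Icc_subset_Icc hc.1 ha.2
    obtain ⟨x, hx⟩ :=
      exists_isCycleIn_of_horseshoe' (hcont.mono hI) hfc hfa hba hcb hfb hp hpq hcop
    exact ⟨x, p, q, hx.mono hI, hρ⟩

/-- If a continuous interval map `f` has a horseshoe (points `a, b, c` with
`f c ≤ a = f a < b < c ≤ f b` or `f c ≥ a = f a > b > c ≥ f b`), then for every rational
`ρ` with `0 < ρ ≤ 1/2`, `f` has a cycle of over-rotation number `ρ`. -/
theorem horseshoe_gives_all_rotation_numbers (f : ℝ → ℝ) (lo hi : ℝ) (hle : lo ≤ hi)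
    (hcont : ContinuousOn f (Set.Icc lo hi))
    (hmaps : Set.MapsTo f (Set.Icc lo hi) (Set.Icc lo hi))
    (a b c : ℝ) (ha : a ∈ Set.Icc lo hi) (hb : b ∈ Set.Icc lo hi) (hc : c ∈ Set.Icc lo hi)
    (hhs : (f c ≤ a ∧ f a = a ∧ a < b ∧ b < c ∧ c ≤ f b) ∨
      (f c ≥ a ∧ f a = a ∧ a > b ∧ b > c ∧ c ≥ f b)) :
    ∀ ρ : ℚ, 0 < ρ → ρ ≤ 1 / 2 →
      ∃ (x : ℝ) (p q : ℕ), IsCycleIn f (Set.Icc lo hi) x p q ∧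
        (p : ℝ) / (q : ℝ) = (ρ : ℝ) :=
  horseshoe_gives_all_rotation_numbers_general f lo hi hcont a b c ha hc hhs

end OverRotation
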